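/- arXiv:1106.2095 — 3 statements merged into one kernel-verified Lean document; each statement's English description precedes it below -/
import Mathlib

section
/- Let ℙ be a probability measure on a filtered probability space with discrete filtration (𝓕_k)_{k=0}^n, let S(k) be an adapted integrable process, γ a predictable process with γ(0) = 0, and g(k, ·) an 𝓕_k-measurable convex cost function with dual G(k, y) = sup_ν (νy − g(k,ν)). If the wealth process Y with Y(0)=x and Y(k+1) = Y(k) + γ(k+1)(S(k+1) − S(k)) − g(k, γ(k+1)−γ(k)) satisfies Y(n) ≥ F ℙ-a.s. for an integrable random variable F, then x ≥ 𝔼^ℙ[ F − Σ_{k=0}^{n−1} G(k, 𝔼^ℙ[S(n)|𝓕_k] − S(k)) ]. -/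
/-!
Summation by parts writes the terminal wealth as `x + ∑ₖ Δγₖ (S n - S k) - g(k, Δγₖ)`.
Splitting `S n - S k = (S n - 𝔼[S n | 𝓕 k]) + (𝔼[S n | 𝓕 k] - S k)`, the Fenchel–Young
inequality bounds `Δγₖ (𝔼[S n | 𝓕 k] - S k) - g(k, Δγₖ)` by `G(k, 𝔼[S n | 𝓕 k] - S k)`, while
`Δγₖ (S n - 𝔼[S n | 𝓕 k])` has mean zero because `Δγₖ` is `𝓕 k`-measurable. Integrating
`F ≤ Y n` gives the bound.
-/

open MeasureTheory

theorem Finset.sum_range_mul_sub_eq_sum_sub_mul_sub {R : Type*} [CommRing R] (a b : ℕ → R)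
    (ha : a 0 = 0) (n : ℕ) :
    ∑ k ∈ Finset.range n, a (k + 1) * (b (k + 1) - b k)
      = ∑ k ∈ Finset.range n, (a (k + 1) - a k) * (b n - b k) := by
  induction n with
  | zero => simp
  | succ n ih =>
    have htel : ∑ k ∈ Finset.range n, (a (k + 1) - a k) = a n := by
      rw [Finset.sum_range_sub a, ha, sub_zero]
    calc ∑ k ∈ Finset.range (n + 1), a (k + 1) * (b (k + 1) - b k)
        = ∑ k ∈ Finset.range n, (a (k + 1) - a k) * (b n - b k)
            + (∑ k ∈ Finset.range n, (a (k + 1) - a k)) * (b (n + 1) - b n)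
            + (a (n + 1) - a n) * (b (n + 1) - b n) := by
          rw [Finset.sum_range_succ, ih, htel]; ring
      _ = ∑ k ∈ Finset.range (n + 1), (a (k + 1) - a k) * (b (n + 1) - b k) := by
          rw [Finset.sum_range_succ, Finset.sum_mul, ← Finset.sum_add_distrib]
          congr 1
          exact Finset.sum_congr rfl fun k _ => by ring

theorem wealth_eq_add_sum_sub_mul {γ S Y : ℕ → ℝ} {c : ℕ → ℝ → ℝ} {n : ℕ} (hγ0 : γ 0 = 0)
    (hY : ∀ k < n, Y (k + 1) = Y k + γ (k + 1) * (S (k + 1) - S k) - c k (γ (k + 1) - γ k)) :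
    Y n = Y 0 + ∑ k ∈ Finset.range n,
      ((γ (k + 1) - γ k) * (S n - S k) - c k (γ (k + 1) - γ k)) := by
  have htel : Y n - Y 0 = ∑ k ∈ Finset.range n,
      (γ (k + 1) * (S (k + 1) - S k) - c k (γ (k + 1) - γ k)) := by
    rw [← Finset.sum_range_sub Y]
    exact Finset.sum_congr rfl fun k hk => by
      rw [hY k (Finset.mem_range.mp hk)]; ring
  rw [Finset.sum_sub_distrib, Finset.sum_range_mul_sub_eq_sum_sub_mul_sub γ S hγ0,
    ← Finset.sum_sub_distrib] at htel
  linarith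

theorem integral_mul_sub_condExp_eq_zero {Ω : Type*} {m m₀ : MeasurableSpace Ω}
    {μ : Measure Ω} [IsFiniteMeasure μ] (hm : m ≤ m₀) {f X : Ω → ℝ}
    (hf : StronglyMeasurable[m] f) (hX : Integrable X μ)
    (hfX : Integrable (fun ω => f ω * (X ω - μ[X | m] ω)) μ) :
    ∫ ω, f ω * (X ω - μ[X | m] ω) ∂μ = 0 := by
  have hresid : μ[X - μ[X | m] | m] =ᵐ[μ] 0 := by
    filter_upwards [condExp_sub hX integrable_condExp m] with ω hω
    rw [hω, Pi.sub_apply,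
      condExp_of_stronglyMeasurable hm stronglyMeasurable_condExp integrable_condExp, sub_self]
    rfl
  calc ∫ ω, f ω * (X ω - μ[X | m] ω) ∂μ = ∫ ω, μ[f * (X - μ[X | m]) | m] ω ∂μ :=
        (integral_condExp hm).symm
    _ = 0 := by
      rw [← integral_zero Ω ℝ]
      refine integral_congr_ae ?_
      filter_upwards [condExp_mul_of_stronglyMeasurable_left (g := X - μ[X | m]) hf hfX
        (hX.sub integrable_condExp), hresid] with ω h1 h2
      rw [h1, Pi.mul_apply, h2, Pi.zero_apply, mul_zero]

theorem weak_duality_discrete_friction_general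
    {Ω : Type*} {m : MeasurableSpace Ω} (ℙ : Measure Ω) [IsProbabilityMeasure ℙ]
    (n : ℕ) (𝓕 : Filtration ℕ m)
    (S : ℕ → Ω → ℝ)
    (hSint : ∀ k, Integrable (S k) ℙ)
    (γ : ℕ → Ω → ℝ) (hγ0 : ∀ ω, γ 0 ω = 0)
    (hγpred : ∀ k, StronglyMeasurable[𝓕 k] (γ (k + 1)))
    (g G : ℕ → Ω → ℝ → ℝ)
    (hconj : ∀ k ω ν y, ν * y - g k ω ν ≤ G k ω y)
    (hGint : ∀ k, Integrable (fun ω => G k ω ((ℙ[S n | 𝓕 k]) ω - S k ω)) ℙ)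
    (hprodint : ∀ k, Integrable (fun ω => (γ (k + 1) ω - γ k ω) * (S n ω - S k ω)) ℙ)
    (hprodint' : ∀ k,
      Integrable (fun ω => (γ (k + 1) ω - γ k ω) * ((ℙ[S n | 𝓕 k]) ω - S k ω)) ℙ)
    (x : ℝ) (Y : ℕ → Ω → ℝ) (hY0 : ∀ ω, Y 0 ω = x)
    (hYrec : ∀ k < n, ∀ ω,
      Y (k + 1) ω = Y k ω + γ (k + 1) ω * (S (k + 1) ω - S k ω)
        - g k ω (γ (k + 1) ω - γ k ω))
    (F : Ω → ℝ) (hFint : Integrable F ℙ)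
    (hsuper : ∀ᵐ ω ∂ℙ, F ω ≤ Y n ω) :
    (∫ ω, (F ω - ∑ k ∈ Finset.range n, G k ω ((ℙ[S n | 𝓕 k]) ω - S k ω)) ∂ℙ) ≤ x := by
  have hΔγ : ∀ k, StronglyMeasurable[𝓕 k] (fun ω => γ (k + 1) ω - γ k ω) := by
    rintro (_ | k)
    · simpa only [hγ0, sub_zero] using hγpred 0
    · exact (hγpred (k + 1)).sub ((hγpred k).mono (𝓕.mono k.le_succ))
  set H : ℕ → Ω → ℝ := fun k ω => (γ (k + 1) ω - γ k ω) * (S n ω - ℙ[S n | 𝓕 k] ω)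
  have hHint : ∀ k, Integrable (H k) ℙ := fun k =>
    ((hprodint k).sub (hprodint' k)).congr (ae_of_all _ fun ω => by simp only [H, Pi.sub_apply]; ring)
  have hH : ∀ k, ∫ ω, H k ω ∂ℙ = 0 := fun k =>
    integral_mul_sub_condExp_eq_zero (𝓕.le k) (hΔγ k) (hSint n) (hHint k)
  have hpt : ∀ᵐ ω ∂ℙ, F ω - ∑ k ∈ Finset.range n, G k ω (ℙ[S n | 𝓕 k] ω - S k ω)
      ≤ x + ∑ k ∈ Finset.range n, H k ω := by
    filter_upwards [hsuper] with ω hω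
    rw [wealth_eq_add_sum_sub_mul (Y := (Y · ω)) (γ := (γ · ω)) (S := (S · ω)) (c := (g · ω))
      (hγ0 ω) (hYrec · · ω), hY0] at hω
    have hstep := Finset.sum_le_sum fun k (_ : k ∈ Finset.range n) =>
      show (γ (k + 1) ω - γ k ω) * (S n ω - S k ω) - g k ω (γ (k + 1) ω - γ k ω)
          ≤ H k ω + G k ω (ℙ[S n | 𝓕 k] ω - S k ω) by
        linarith [hconj k ω (γ (k + 1) ω - γ k ω) (ℙ[S n | 𝓕 k] ω - S k ω)]
    rw [Finset.sum_add_distrib] at hstep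
    linarith
  calc (∫ ω, (F ω - ∑ k ∈ Finset.range n, G k ω (ℙ[S n | 𝓕 k] ω - S k ω)) ∂ℙ)
      ≤ ∫ ω, (x + ∑ k ∈ Finset.range n, H k ω) ∂ℙ :=
        integral_mono_ae (hFint.sub (integrable_finsetSum _ fun k _ => hGint k))
          ((integrable_const x).add (integrable_finsetSum _ fun k _ => hHint k)) hpt
    _ = x := by
        rw [integral_add (integrable_const x) (integrable_finsetSum _ fun k _ => hHint k),
          integral_finsetSum _ fun k _ => hHint k]
        simp [hH]

/-- Weak duality for the discrete-time market with friction: if the wealth process `Y`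
with initial capital `x`, predictable strategy `γ` and convex trading cost `g`
super-replicates `F` a.s., then `x` dominates the dual value
`𝔼[F − Σ_k G(k, 𝔼[S n | 𝓕 k] − S k)]`, where `G(k,·)` dominates the convex conjugate of
`g(k,·)` (all relevant random variables being assumed integrable). -/
theorem weak_duality_discrete_friction
    {Ω : Type*} {m : MeasurableSpace Ω} (ℙ : Measure Ω) [IsProbabilityMeasure ℙ]
    (n : ℕ) (𝓕 : Filtration ℕ m)
    (S : ℕ → Ω → ℝ)
    (hSadapted : ∀ k, StronglyMeasurable[𝓕 k] (S k))
    (hSint : ∀ k, Integrable (S k) ℙ)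
    (γ : ℕ → Ω → ℝ) (hγ0 : ∀ ω, γ 0 ω = 0)
    (hγpred : ∀ k, StronglyMeasurable[𝓕 k] (γ (k + 1)))
    (g G : ℕ → Ω → ℝ → ℝ)
    (hg0 : ∀ k ω, g k ω 0 = 0)
    (hgnn : ∀ k ω ν, 0 ≤ g k ω ν)
    (hgconv : ∀ k ω, ConvexOn ℝ Set.univ (g k ω))
    (hconj : ∀ k ω ν y, ν * y - g k ω ν ≤ G k ω y)
    (hGint : ∀ k, Integrable (fun ω => G k ω ((ℙ[S n | 𝓕 k]) ω - S k ω)) ℙ)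
    (hprodint : ∀ k, Integrable (fun ω => (γ (k + 1) ω - γ k ω) * (S n ω - S k ω)) ℙ)
    (hprodint' : ∀ k,
      Integrable (fun ω => (γ (k + 1) ω - γ k ω) * ((ℙ[S n | 𝓕 k]) ω - S k ω)) ℙ)
    (x : ℝ) (Y : ℕ → Ω → ℝ) (hY0 : ∀ ω, Y 0 ω = x)
    (hYrec : ∀ k < n, ∀ ω,
      Y (k + 1) ω = Y k ω + γ (k + 1) ω * (S (k + 1) ω - S k ω)
        - g k ω (γ (k + 1) ω - γ k ω))
    (F : Ω → ℝ) (hFint : Integrable F ℙ)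
    (hsuper : ∀ᵐ ω ∂ℙ, F ω ≤ Y n ω) :
    (∫ ω, (F ω - ∑ k ∈ Finset.range n, G k ω ((ℙ[S n | 𝓕 k]) ω - S k ω)) ∂ℙ) ≤ x :=
  weak_duality_discrete_friction_general ℙ n 𝓕 S hSint γ hγ0 hγpred g G hconj hGint hprodint
    hprodint' x Y hY0 hYrec F hFint hsuper
end

section
/- Let ℙ be a probability measure on Ω = {−1,1}^n with filtration 𝓕_k, S(k) = s₀ exp(σ n^{−1/2} Σ_{i=1}^k ξ_i) with s₀, σ > 0, and M(k) = 𝔼^ℙ[S(n)|𝓕_k]. If |M(k) − S(k)| ≤ (c/√n) S(k) ℙ-a.s. for all k ≤ n, then |M(k+1) − M(k)| ≤ (c₁/√n) S(k) ℙ-a.s. for some constant c₁ depending only on c and σ (for all n large enough). -/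
/-! The bound is pathwise: by the triangle inequality
`|M (k+1) - M k| ≤ |M (k+1) - S (k+1)| + |S (k+1) - S k| + |S k - M k|`, and one step of the
binomial process multiplies `S k` by `exp (±σ/√n)`, so `S (k+1) ≤ e^σ S k` and
`|S (k+1) - S k| ≤ (σ/√n) e^σ S k` once `n ≥ 1`. -/

open MeasureTheory

section

open Real

theorem Real.abs_exp_sub_one_le_abs_mul_exp_abs (y : ℝ) :
    |exp y - 1| ≤ |y| * exp |y| := by
  rcases le_total 0 y with hy | hy
  · have hsub : 1 - y ≤ exp (-y) := by linarith [add_one_le_exp (-y)]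
    have hprod : exp (-y) * exp y = 1 := by
      rw [← exp_add, neg_add_cancel, exp_zero]
    rw [abs_of_nonneg (by linarith [add_one_le_exp y]), abs_of_nonneg hy]
    nlinarith [exp_pos y]
  · rw [abs_of_nonpos (by simpa using exp_le_one_iff.2 hy), abs_of_nonpos hy]
    nlinarith [add_one_le_exp y, one_le_exp (neg_nonneg.2 hy)]

theorem abs_mul_exp_sub_self_le {s y a : ℝ} (hs : 0 ≤ s) (hy : |y| ≤ a) :
    |s * exp y - s| ≤ a * exp a * s := calc
  |s * exp y - s| = |exp y - 1| * s := by
    rw [← mul_sub_one, abs_mul, abs_of_nonneg hs, mul_comm]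
  _ ≤ |y| * exp |y| * s := by gcongr; exact abs_exp_sub_one_le_abs_mul_exp_abs y
  _ ≤ a * exp a * s := by have := (abs_nonneg y).trans hy; gcongr

theorem abs_sub_le_of_relative_near {m m' s s' ε K δ : ℝ} (hε : 0 ≤ ε)
    (hm : |m - s| ≤ ε * s) (hm' : |m' - s'| ≤ ε * s')
    (hs' : s' ≤ K * s) (hss' : |s' - s| ≤ δ * s) :
    |m' - m| ≤ (ε * K + δ + ε) * s := calc
  |m' - m| ≤ |m' - s'| + |s' - s| + |s - m| := by
    linarith [abs_sub_le m' s' m, abs_sub_le s' s m]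
  _ ≤ ε * s' + δ * s + ε * s := by
    rw [abs_sub_comm s m]; gcongr
  _ ≤ ε * (K * s) + δ * s + ε * s := by gcongr
  _ = (ε * K + δ + ε) * s := by ring

end

/-- If the martingale `M k = 𝔼[S n | 𝓕 k]` stays within relative distance `c/√n` of the
binomial price process `S k = s₀ exp(σ n^{−1/2} Σ_{i≤k} ξ_i)`, then its increments satisfy
`|M (k+1) − M k| ≤ (c₁/√n) S k` a.s., for a constant `c₁` depending only on `c` and `σ`,
for all `n` large enough. -/
theorem martingale_increment_bound (c σ : ℝ) (hc : 0 < c) (hσ : 0 < σ) :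
    ∃ c₁ : ℝ, 0 < c₁ ∧ ∃ N : ℕ, ∀ n : ℕ, N ≤ n →
      ∀ (Ω : Type) (mΩ : MeasurableSpace Ω) (ℙ : @Measure Ω mΩ),
      IsProbabilityMeasure ℙ →
      ∀ (𝓕 : Filtration ℕ mΩ) (ξ : ℕ → Ω → ℝ) (s₀ : ℝ), 0 < s₀ →
      (∀ i ω, ξ i ω = 1 ∨ ξ i ω = -1) →
      (∀ i, StronglyMeasurable[𝓕 i] (ξ i)) →
      ∀ S M : ℕ → Ω → ℝ,
      (∀ k ω, S k ω =
        s₀ * Real.exp (σ / Real.sqrt n * ∑ i ∈ Finset.range k, ξ (i + 1) ω)) →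
      (∀ k, M k =ᵐ[ℙ] ℙ[S n | 𝓕 k]) →
      (∀ k ≤ n, ∀ᵐ ω ∂ℙ, |M k ω - S k ω| ≤ c / Real.sqrt n * S k ω) →
      ∀ k < n, ∀ᵐ ω ∂ℙ, |M (k + 1) ω - M k ω| ≤ c₁ / Real.sqrt n * S k ω := by
  refine ⟨(c + σ) * Real.exp σ + c, by positivity, 1, ?_⟩
  intro n hn Ω mΩ ℙ _ 𝓕 ξ s₀ hs₀ hξ _ S M hS _ hnear k hk
  filter_upwards [hnear k hk.le, hnear (k + 1) hk] with ω hωk hωk'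
  have hsqrt : 1 ≤ Real.sqrt n := Real.one_le_sqrt.2 (by exact_mod_cast hn)
  have hSk : 0 < S k ω := by rw [hS]; positivity
  have hstep : S (k + 1) ω = S k ω * Real.exp (σ / Real.sqrt n * ξ (k + 1) ω) := by
    rw [hS, hS, Finset.sum_range_succ, mul_add, Real.exp_add, mul_assoc]
  have hσn : σ / Real.sqrt n ≤ σ := div_le_self hσ.le hsqrt
  have hy : |σ / Real.sqrt n * ξ (k + 1) ω| = σ / Real.sqrt n := by
    have hξ1 : |ξ (k + 1) ω| = 1 := by rcases hξ (k + 1) ω with h | h <;> simp [h]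
    rw [abs_mul, hξ1, mul_one, abs_of_pos (by positivity)]
  have hgrowth : S (k + 1) ω ≤ Real.exp σ * S k ω := by
    rw [hstep, mul_comm]
    gcongr
    exact (le_abs_self _).trans (hy.trans_le hσn)
  have hincr : |S (k + 1) ω - S k ω| ≤ σ / Real.sqrt n * Real.exp σ * S k ω := calc
    _ ≤ σ / Real.sqrt n * Real.exp (σ / Real.sqrt n) * S k ω := by
      rw [hstep]; exact abs_mul_exp_sub_self_le hSk.le hy.le
    _ ≤ σ / Real.sqrt n * Real.exp σ * S k ω := by gcongr
  calc |M (k + 1) ω - M k ω|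
      ≤ (c / Real.sqrt n * Real.exp σ + σ / Real.sqrt n * Real.exp σ + c / Real.sqrt n)
          * S k ω :=
        abs_sub_le_of_relative_near (by positivity) hωk hωk' hgrowth hincr
    _ = ((c + σ) * Real.exp σ + c) / Real.sqrt n * S k ω := by ring
end

section
/- Let σ > 0 and define for each n the random variable L_n = (σ/√n) Σ_{j=1}^{n} ξ_j where ξ_j are the coordinate maps on {−1,1}^∞ with the symmetric product measure. Let α_n(k) be uniformly bounded adapted processes, and suppose Y_n(t) = Σ_{j=1}^{[nt]} (M_n(j)−M_n(j−1))/S_n(j−1) with M_n(j) = S_n(j)(1 + ξ_j α_n(j) n^{−1/2}) and S_n(j) = s₀ exp(σ n^{−1/2} Σ_{i≤j} ξ_i). Then there exists a constant c₃ (depending only on σ, s₀, and the bound on α_n) such that for all n and all t ∈ [0,1], |Y_n(t) − (σ/√n)Σ_{j=1}^{[nt]} ξ_j − (σ/(2n))(σ[nt] + 2Σ_{j=1}^{[nt]} α_n(j))| ≤ c₃/√n almost surely. -/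
/-!
Each normalized increment is `exp x * (1 + y) - (1 + g)` with `x = σ ξ_{j+1} / √n` and
`y = ξ_{j+1} α_{j+1} / √n`. Expanding `exp x` to second order and using `ξ² = 1` (so that
`x² = σ² / n` and `x y = σ α_{j+1} / n`) leaves an `O(n^{-3/2})` error plus the difference
`y - g` of consecutive terms of `ξ_j α_j / √n`. Summing at most `n` terms gives
`O(n^{-1/2})`, and the differences telescope to a quantity of size `2K / √n`.
-/

open Finset Real

lemma Real.abs_exp_sub_quadratic_le (x : ℝ) :
    |exp x - (1 + x + x ^ 2 / 2)| ≤ |x| ^ 3 * exp |x| := by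
  have h := Complex.norm_exp_sub_sum_le_norm_mul_exp x 3
  norm_num [sum_range_succ, Nat.factorial] at h
  exact_mod_cast h

lemma abs_exp_mul_one_add_sub_le {x y a b : ℝ} (hx : |x| ≤ a) (hy : |y| ≤ b) :
    |exp x * (1 + y) - (1 + x + x ^ 2 / 2 + y + x * y)|
      ≤ a ^ 3 * exp a * (1 + b) + a ^ 2 * b / 2 := by
  have ha : 0 ≤ a := (abs_nonneg x).trans hx
  have hR : |exp x - (1 + x + x ^ 2 / 2)| ≤ a ^ 3 * exp a :=
    (abs_exp_sub_quadratic_le x).trans (by gcongr)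
  have hy' : |1 + y| ≤ 1 + b := (abs_add_le _ _).trans (by rw [abs_one]; gcongr)
  have hx2 : x ^ 2 ≤ a ^ 2 := by rw [← sq_abs]; gcongr
  calc |exp x * (1 + y) - (1 + x + x ^ 2 / 2 + y + x * y)|
      = |(exp x - (1 + x + x ^ 2 / 2)) * (1 + y) + x ^ 2 * y / 2| := by
        congr 1; ring
    _ ≤ |exp x - (1 + x + x ^ 2 / 2)| * |1 + y| + x ^ 2 * |y| / 2 := by
      refine (abs_add_le _ _).trans_eq ?_
      rw [abs_mul, abs_div, abs_mul, abs_of_nonneg (sq_nonneg x), abs_two]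
    _ ≤ a ^ 3 * exp a * (1 + b) + a ^ 2 * b / 2 := by gcongr

lemma abs_sum_range_le_of_sub_telescoping {d g : ℕ → ℝ} {δ G : ℝ}
    (hd : ∀ j, |d j - (g (j + 1) - g j)| ≤ δ) (hg : ∀ j, |g j| ≤ G) (m : ℕ) :
    |∑ j ∈ range m, d j| ≤ m * δ + 2 * G := by
  have hsplit : ∑ j ∈ range m, d j
      = ∑ j ∈ range m, (d j - (g (j + 1) - g j)) + (g m - g 0) := by
    rw [sum_sub_distrib, sum_range_sub]; ring
  calc |∑ j ∈ range m, d j|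
      ≤ ∑ j ∈ range m, |d j - (g (j + 1) - g j)| + (|g m| + |g 0|) := by
        rw [hsplit]
        exact (abs_add_le _ _).trans (add_le_add (abs_sum_le_sum_abs _ _) (abs_sub _ _))
    _ ≤ ∑ _j ∈ range m, δ + (G + G) := by gcongr with j; exacts [hd j, hg m, hg 0]
    _ = m * δ + 2 * G := by rw [sum_const, card_range, nsmul_eq_mul]; ring

section Increments

variable {σ s₀ r K : ℝ} {ξ α S M : ℕ → ℝ}

lemma increment_div_eq (hs₀ : s₀ ≠ 0)
    (hS : ∀ j, S j = s₀ * exp (σ / r * ∑ i ∈ range j, ξ (i + 1)))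
    (hM : ∀ j, M j = S j * (1 + ξ j * α j / r)) (j : ℕ) :
    (M (j + 1) - M j) / S j
      = exp (σ / r * ξ (j + 1)) * (1 + ξ (j + 1) * α (j + 1) / r) - (1 + ξ j * α j / r) := by
  have hSj : S j ≠ 0 := by rw [hS]; positivity
  have hstep : S (j + 1) = S j * exp (σ / r * ξ (j + 1)) := by
    rw [hS, hS, sum_range_succ, mul_add, exp_add, mul_assoc]
  rw [hM, hM, hstep]
  field_simp

lemma abs_increment_div_sub_le (hσ : 0 ≤ σ) (hr : 1 ≤ r) (hs₀ : s₀ ≠ 0)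
    (hξ : ∀ i, ξ i = 1 ∨ ξ i = -1) (hα : ∀ j, |α j| ≤ K)
    (hS : ∀ j, S j = s₀ * exp (σ / r * ∑ i ∈ range j, ξ (i + 1)))
    (hM : ∀ j, M j = S j * (1 + ξ j * α j / r)) (j : ℕ) :
    |(M (j + 1) - M j) / S j - (σ / r * ξ (j + 1) + σ / (2 * r ^ 2) * (σ + 2 * α (j + 1)))
        - (ξ (j + 1) * α (j + 1) / r - ξ j * α j / r)|
      ≤ (σ ^ 3 * exp σ * (1 + K) + σ ^ 2 * K / 2) / r ^ 3 := by
  have hr0 : 0 < r := one_pos.trans_le hr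
  have hξ1 : |ξ (j + 1)| = 1 := (abs_eq zero_le_one).2 (hξ (j + 1))
  have hξ2 : ξ (j + 1) ^ 2 = 1 := by rw [← sq_abs, hξ1, one_pow]
  rw [increment_div_eq hs₀ hS hM]
  set x := σ / r * ξ (j + 1)
  set y := ξ (j + 1) * α (j + 1) / r
  have hx : |x| ≤ σ / r := by
    rw [abs_mul, hξ1, mul_one, abs_div, abs_of_nonneg hσ, abs_of_pos hr0]
  have hy : |y| ≤ K / r := by
    rw [abs_div, abs_mul, hξ1, one_mul, abs_of_pos hr0]; gcongr; exact hα _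
  have hK : 0 ≤ K := (abs_nonneg _).trans (hα 0)
  have hexp : exp (σ / r) ≤ exp σ := exp_le_exp.2 (div_le_self hσ hr)
  have hKr : K / r ≤ K := div_le_self hK hr
  calc _ = |exp x * (1 + y) - (1 + x + x ^ 2 / 2 + y + x * y)| := by
        congr 1
        simp only [x, y]
        field_simp
        linear_combination (σ ^ 2 + 2 * σ * α (j + 1)) * hξ2
    _ ≤ (σ / r) ^ 3 * exp (σ / r) * (1 + K / r) + (σ / r) ^ 2 * (K / r) / 2 :=
        abs_exp_mul_one_add_sub_le hx hy
    _ ≤ (σ / r) ^ 3 * exp σ * (1 + K) + (σ / r) ^ 2 * (K / r) / 2 := by gcongr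
    _ = (σ ^ 3 * exp σ * (1 + K) + σ ^ 2 * K / 2) / r ^ 3 := by field_simp

end Increments

/-- Summed Taylor estimate: with `S j = s₀ exp(σ n^{−1/2} Σ_{i≤j} ξ_i)`,
`M j = S j (1 + ξ_j α_j n^{−1/2})`, `ξ_i ∈ {−1,1}` and `|α j| ≤ K`, there is a constant
`c₃` depending only on `σ, s₀, K` such that for all `n ≥ 1` and `t ∈ [0,1]`,
`|Y_n(t) − (σ/√n) Σ_{j≤[nt]} ξ_j − (σ/(2n))(σ[nt] + 2Σ_{j≤[nt]} α_j)| ≤ c₃/√n`, where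
`Y_n(t) = Σ_{j=1}^{[nt]} (M j − M (j−1))/S (j−1)`. -/
theorem summed_taylor_estimate (σ s₀ K : ℝ) (hσ : 0 < σ) (hs₀ : 0 < s₀) (hK : 0 < K) :
    ∃ c₃ : ℝ, 0 < c₃ ∧ ∀ n : ℕ, 1 ≤ n →
      ∀ ξ α : ℕ → ℝ, (∀ i, ξ i = 1 ∨ ξ i = -1) → (∀ j, |α j| ≤ K) →
      ∀ S M : ℕ → ℝ,
      (∀ j, S j = s₀ * Real.exp (σ / Real.sqrt n * ∑ i ∈ Finset.range j, ξ (i + 1))) →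
      (∀ j, M j = S j * (1 + ξ j * α j / Real.sqrt n)) →
      ∀ t : ℝ, 0 ≤ t → t ≤ 1 →
      |(∑ j ∈ Finset.range ⌊(n : ℝ) * t⌋₊, (M (j + 1) - M j) / S j)
          - σ / Real.sqrt n * ∑ j ∈ Finset.range ⌊(n : ℝ) * t⌋₊, ξ (j + 1)
          - σ / (2 * n) * (σ * (⌊(n : ℝ) * t⌋₊ : ℝ)
              + 2 * ∑ j ∈ Finset.range ⌊(n : ℝ) * t⌋₊, α (j + 1))|
        ≤ c₃ / Real.sqrt n := by
  set C := σ ^ 3 * exp σ * (1 + K) + σ ^ 2 * K / 2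
  refine ⟨C + 2 * K, by positivity, ?_⟩
  intro n hn ξ α hξ hα S M hS hM t ht0 ht1
  set r := √(n : ℝ)
  have hr : 1 ≤ r := one_le_sqrt.2 (by exact_mod_cast hn)
  have hrn : r ^ 2 = n := sq_sqrt (Nat.cast_nonneg n)
  set m := ⌊(n : ℝ) * t⌋₊
  have hmn : (m : ℝ) ≤ n :=
    (Nat.floor_le (by positivity)).trans (mul_le_of_le_one_right (Nat.cast_nonneg n) ht1)
  have hg : ∀ j, |ξ j * α j / r| ≤ K / r := fun j => by
    rw [abs_div, abs_mul, (abs_eq zero_le_one).2 (hξ j), one_mul, abs_of_pos (one_pos.trans_le hr)]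
    gcongr
    exact hα j
  have hsum := abs_sum_range_le_of_sub_telescoping
    (abs_increment_div_sub_le hσ.le hr hs₀.ne' hξ hα hS hM) hg m
  calc _ = |∑ j ∈ range m, ((M (j + 1) - M j) / S j
          - (σ / r * ξ (j + 1) + σ / (2 * r ^ 2) * (σ + 2 * α (j + 1))))| := by
        congr 1
        rw [hrn, sum_sub_distrib, sum_add_distrib, ← mul_sum, ← mul_sum, sum_add_distrib,
          sum_const, card_range, nsmul_eq_mul, ← mul_sum]
        ring
    _ ≤ m * (C / r ^ 3) + 2 * (K / r) := hsum
    _ ≤ n * (C / r ^ 3) + 2 * (K / r) := by gcongr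
    _ = (C + 2 * K) / r := by rw [← hrn]; field_simp
end
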